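/- Suppose M ≥ 10, L ≥ max(0.62, 0.15*M), r ≥ 1 with r ≥ sup_{y∈[0,1]} |Q*s(y)|, and 0 < t < 1/(B+C). Then there exists ε₀ > 0 such that for every ε with 0 < ε ≤ min(ε₀, B/(2*(L*r + L + r))), any r-admissible fixed point Φ* of the graph transform in G_L satisfies Φ*(1)(1) < T_c; consequently the iceline increment G(Φ*(1), 1) = ε*(Φ*(1)(1) - T_c) at the pole η = 1 is negative, i.e. an ice line placed at the pole moves equatorward and the ice-free earth is unstable. -/

import Mathlib

noncomputable section

open scoped BoundedContinuousFunction

namespace Budyko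

/-- Solar constant (W/m²). -/
def Q : ℝ := 343
/-- OLR constant A (W/m²). -/
def A : ℝ := 202
/-- OLR constant B (W/m²/°C). -/
def B : ℝ := 1.9
/-- Transport constant C (W/m²/°C). -/
def C : ℝ := 3.04
/-- Critical temperature (°C). -/
def Tc : ℝ := -10

/-- Insolation distribution. -/
def s (y : ℝ) : ℝ := 1 - 0.241 * (3 * y ^ 2 - 1)

/-- Clamp to `[0,1]`. -/
def clamp (y : ℝ) : ℝ := min (max y 0) 1

/-- Insolation extended to the real line. -/
def sTilde (y : ℝ) : ℝ := s (clamp y)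

/-- Iceline-dependent smooth albedo with steepness `M`. -/
def albedo (M η y : ℝ) : ℝ := 0.47 + 0.15 * Real.tanh (M * (clamp y - η))

/-- The Budyko vector field `F(T,η)(y)`. -/
def F (M : ℝ) (T : ℝ →ᵇ ℝ) (η y : ℝ) : ℝ :=
  Q * sTilde y * (1 - albedo M η y) - (B + C) * T y - A + C * ∫ u in (0:ℝ)..1, T u

/-- `g(η) = ∫₀¹ Q s(y) (1 - a(η)(y)) dy`. -/
def g (M η : ℝ) : ℝ := ∫ y in (0:ℝ)..1, Q * s y * (1 - albedo M η y)

/-- The local equilibrium temperature profile `T*(η)(y)`. -/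
def Tstar (M η y : ℝ) : ℝ :=
  (Q * sTilde y * (1 - albedo M η y) - A + (C / B) * (g M η - A)) / (B + C)

/-- Membership in the class `G_L` of Lipschitz graphs. -/
def MemGL (L : ℝ) (Φ : ℝ → ℝ →ᵇ ℝ) : Prop :=
  ∀ ζ η : ℝ, ‖Φ ζ - Φ η‖ ≤ L * |ζ - η|

/-- A graph is `r`-admissible if `‖Φ‖_G ≤ r` and every `Φ(η)` is `r`-Lipschitz. -/
def Admissible (r : ℝ) (Φ : ℝ → ℝ →ᵇ ℝ) : Prop :=
  (∀ η : ℝ, ‖Φ η‖ ≤ r) ∧ ∀ η x z : ℝ, |Φ η x - Φ η z| ≤ r * |x - z|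

/-- `Ψ` is a graph-transform image of `Φ` (time step `t`, slow parameter `ε`). -/
def IsGTImage (M t ε : ℝ) (Φ Ψ : ℝ → ℝ →ᵇ ℝ) : Prop :=
  ∀ η ξ : ℝ, η = ξ + ε * t * (Φ ξ ξ - Tc) → ∀ y : ℝ, Ψ η y = Φ ξ y + t * F M (Φ ξ) ξ y

/-- `Φ` is a fixed point of the Budyko graph transform. -/
def IsGTFixed (M t ε : ℝ) (Φ : ℝ → ℝ →ᵇ ℝ) : Prop := IsGTImage M t ε Φ Φ

/-! At a fixed point, one step of the graph transform moves the iceline from `1` to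
`η = 1 + ε t (Φ(1)(1) - T_c)` and replaces `Φ(1)` by `Φ(1) + t F(Φ(1), 1)`, so the Lipschitz bound
on the graph gives `‖F(Φ(1), 1)‖ ≤ L ε (r + 10)`. For small `ε` the profile `T = Φ(1)` is therefore
an approximate equilibrium, `|F(T, 1)| ≤ 1`. Integrating over `[0, 1]` bounds the mean of `T`
from above, because the albedo exceeds `0.32` and `∫₀¹ s = 1`; evaluating at the pole, where
`a = 0.47` and `s = 0.518`, then gives `T(1) < -11 < T_c`. -/

open Set intervalIntegral

@[fun_prop]
lemma continuous_tanh : Continuous Real.tanh := by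
  rw [funext Real.tanh_eq_sinh_div_cosh]
  exact Real.continuous_sinh.div Real.continuous_cosh fun x => (Real.cosh_pos x).ne'

@[fun_prop]
lemma continuous_clamp : Continuous clamp := by
  unfold clamp
  fun_prop

lemma clamp_of_mem {y : ℝ} (hy : y ∈ Icc 0 1) : clamp y = y := by
  rw [clamp, max_eq_left hy.1, min_eq_left hy.2]

@[fun_prop]
lemma continuous_albedo (M η : ℝ) : Continuous (albedo M η) := by
  unfold albedo
  fun_prop

lemma one_sub_albedo_lt (M η y : ℝ) : 1 - albedo M η y < 0.68 := by
  have := Real.neg_one_lt_tanh (M * (clamp y - η))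
  rw [albedo]
  linarith

lemma albedo_self {η : ℝ} (M : ℝ) (hη : η ∈ Icc 0 1) : albedo M η η = 0.47 := by
  simp [albedo, clamp_of_mem hη]

@[fun_prop]
lemma continuous_s : Continuous s := by
  unfold s
  fun_prop

lemma s_nonneg {y : ℝ} (hy : y ∈ Icc 0 1) : 0 ≤ s y := by
  rw [s]
  nlinarith [hy.1, hy.2]

lemma integral_s : ∫ y in (0:ℝ)..1, s y = 1 := by
  have hpow : IntervalIntegrable (fun y : ℝ => 3 * y ^ 2) MeasureTheory.volume 0 1 :=
    Continuous.intervalIntegrable (by fun_prop) _ _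
  simp only [s]
  rw [integral_sub intervalIntegrable_const ((hpow.sub intervalIntegrable_const).const_mul _),
    integral_const_mul, integral_sub hpow intervalIntegrable_const, integral_const_mul,
    integral_pow]
  norm_num

lemma g_le (M η : ℝ) : g M η ≤ 233.24 := by
  calc g M η ≤ ∫ y in (0:ℝ)..1, 0.68 * (Q * s y) := by
        refine integral_mono_on zero_le_one (Continuous.intervalIntegrable (by fun_prop) _ _)
          (Continuous.intervalIntegrable (by fun_prop) _ _) ?_
        intro y hy
        have hQs : 0 ≤ Q * s y := mul_nonneg (by norm_num [Q]) (s_nonneg hy)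
        nlinarith [one_sub_albedo_lt M η y]
    _ = 233.24 := by
        rw [integral_const_mul, integral_const_mul, integral_s, Q]
        norm_num

lemma integral_F (M : ℝ) (T : ℝ →ᵇ ℝ) (η : ℝ) :
    ∫ y in (0:ℝ)..1, F M T η y = g M η - B * (∫ y in (0:ℝ)..1, T y) - A := by
  set I := ∫ y in (0:ℝ)..1, T y
  have hF : EqOn (F M T η)
      (fun y => Q * s y * (1 - albedo M η y) - (B + C) * T y + (C * I - A)) (uIcc 0 1) := by
    intro y hy
    rw [uIcc_of_le zero_le_one] at hy
    simp only [F, sTilde, clamp_of_mem hy]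
    ring
  have hT : IntervalIntegrable T MeasureTheory.volume 0 1 := T.continuous.intervalIntegrable _ _
  have habs : IntervalIntegrable (fun y => Q * s y * (1 - albedo M η y)) MeasureTheory.volume 0 1 :=
    Continuous.intervalIntegrable (by fun_prop) _ _
  rw [integral_congr hF, integral_add (habs.sub (hT.const_mul _)) intervalIntegrable_const,
    integral_sub habs (hT.const_mul _), integral_const_mul, integral_const, ← g]
  simp only [sub_zero, one_smul]
  ring

lemma abs_F_le_of_isGTFixed {M L t ε : ℝ} {Φ : ℝ → ℝ →ᵇ ℝ} (hGL : MemGL L Φ)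
    (hΦ : IsGTFixed M t ε Φ) (ht : 0 < t) (hε : 0 ≤ ε) (ξ y : ℝ) :
    |F M (Φ ξ) ξ y| ≤ L * ε * |Φ ξ ξ - Tc| := by
  set η := ξ + ε * t * (Φ ξ ξ - Tc)
  refine le_of_mul_le_mul_left ?_ ht
  calc t * |F M (Φ ξ) ξ y| = |(Φ η - Φ ξ) y| := by
        rw [BoundedContinuousFunction.sub_apply, hΦ η ξ rfl y, add_sub_cancel_left, abs_mul,
          abs_of_pos ht]
    _ ≤ ‖Φ η - Φ ξ‖ := (Φ η - Φ ξ).norm_coe_le_norm y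
    _ ≤ L * |η - ξ| := hGL η ξ
    _ = t * (L * ε * |Φ ξ ξ - Tc|) := by
        rw [add_sub_cancel_left, abs_mul, abs_of_nonneg (by positivity)]
        ring

lemma F_at_pole (M : ℝ) (T : ℝ →ᵇ ℝ) :
    F M T 1 1 = Q * 0.518 * 0.53 - (B + C) * T 1 - A + C * ∫ y in (0:ℝ)..1, T y := by
  have h1 : (1 : ℝ) ∈ Icc 0 1 := right_mem_Icc.mpr zero_le_one
  rw [F, sTilde, clamp_of_mem h1, albedo_self M h1, s]
  norm_num

lemma pole_temperature_lt_Tc {M : ℝ} {T : ℝ →ᵇ ℝ} (hF : ∀ y, |F M T 1 y| ≤ 1) : T 1 < Tc := by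
  have hmean : |g M 1 - B * (∫ y in (0:ℝ)..1, T y) - A| ≤ 1 := by
    rw [← integral_F]
    simpa using
      norm_integral_le_of_norm_le_const (a := 0) (b := 1) (f := F M T 1) fun y _ => hF y
  have hpole := hF 1
  rw [F_at_pole] at hpole
  have hg := g_le M 1
  rw [abs_le] at hmean hpole
  simp only [Q, A, B, C, Tc] at *
  linarith [hmean.1, hpole.1]

theorem ice_free_earth_unstable_general (M L r t : ℝ)
    (hL : max 0.62 (0.15 * M) ≤ L) (hr1 : 1 ≤ r)
    (ht0 : 0 < t) :
    ∃ ε₀ > (0:ℝ), ∀ ε : ℝ, 0 < ε → ε ≤ min ε₀ (B / (2 * (L * r + L + r))) →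
      ∀ Φs : ℝ → ℝ →ᵇ ℝ,
        Admissible r Φs → MemGL L Φs → IsGTFixed M t ε Φs →
          Φs 1 1 < Tc ∧ ε * (Φs 1 1 - Tc) < 0 := by
  have hL0 : 0 < L := lt_of_lt_of_le (by norm_num) ((le_max_left _ _).trans hL)
  refine ⟨1 / (L * (r + 10)), by positivity, fun ε hε hεle Φ hadm hGL hfix => ?_⟩
  have hsmall : L * ε * (r + 10) ≤ 1 := by
    have h := (le_min_iff.mp hεle).1
    rw [le_div_iff₀ (by positivity)] at h
    linarith
  have hpole : |Φ 1 1 - Tc| ≤ r + 10 := calc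
    |Φ 1 1 - Tc| ≤ |Φ 1 1| + |Tc| := abs_sub _ _
    _ ≤ r + 10 := by
      rw [show |Tc| = 10 by norm_num [Tc]]
      linarith [(Φ 1).norm_coe_le_norm 1, hadm.1 1, Real.norm_eq_abs (Φ 1 1)]
  have hT : Φ 1 1 < Tc := pole_temperature_lt_Tc fun y =>
    calc |F M (Φ 1) 1 y| ≤ L * ε * |Φ 1 1 - Tc| := abs_F_le_of_isGTFixed hGL hfix ht0 hε.le 1 y
      _ ≤ L * ε * (r + 10) := by gcongr
      _ ≤ 1 := hsmall
  exact ⟨hT, mul_neg_of_pos_of_neg hε (sub_neg.mpr hT)⟩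

/-- Instability of the ice free earth: for ε small, on the invariant graph the iceline
temperature at the pole is below critical, so the iceline moves equatorward. -/
theorem ice_free_earth_unstable (M L r t : ℝ)
    (hM : 10 ≤ M) (hL : max 0.62 (0.15 * M) ≤ L) (hr1 : 1 ≤ r)
    (hrs : ∀ y ∈ Set.Icc (0:ℝ) 1, |Q * s y| ≤ r)
    (ht0 : 0 < t) (ht1 : t < 1 / (B + C)) :
    ∃ ε₀ > (0:ℝ), ∀ ε : ℝ, 0 < ε → ε ≤ min ε₀ (B / (2 * (L * r + L + r))) →
      ∀ Φs : ℝ → ℝ →ᵇ ℝ,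
        Admissible r Φs → MemGL L Φs → IsGTFixed M t ε Φs →
          Φs 1 1 < Tc ∧ ε * (Φs 1 1 - Tc) < 0 :=
  ice_free_earth_unstable_general M L r t hL hr1 ht0
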